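/- Let G be a Dirac graph on n vertices and let 𝒫 be a path cover of G in which every path has at least 2 vertices. Then for every path P ∈ 𝒫 that is good with respect to 𝒫, it holds that M(P) ≥ |𝒫|. -/

import Mathlib

/-- `dOn G Q x` is the number of neighbors of `x` in `G` that lie on the walk `Q`. -/
def dOn {V : Type*} [DecidableEq V] (G : SimpleGraph V) [DecidableRel G.Adj]
    {a b : V} (Q : G.Walk a b) (x : V) : ℕ :=
  (Q.support.toFinset.filter (fun y => G.Adj x y)).card

/-- The number of edges `{qᵢ, qᵢ₊₁}` of `Q` that admit an elementary merge of a path with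
endpoints `u` and `v` into `Q`. -/
def mergeCount {V : Type*} (G : SimpleGraph V) [DecidableRel G.Adj] (u v : V)
    {a b : V} (Q : G.Walk a b) : ℕ :=
  ((Finset.range Q.length).filter (fun i =>
    (G.Adj u (Q.getVert i) ∧ G.Adj v (Q.getVert (i + 1))) ∨
    (G.Adj u (Q.getVert (i + 1)) ∧ G.Adj v (Q.getVert i)))).card

/-- `d(P, Q)`: the number of endpoints of `Q` (a walk from `a` to `b`) that are adjacent to
some endpoint of a path with endpoints `u` and `v`. -/
def dEnds {V : Type*} [DecidableEq V] (G : SimpleGraph V) [DecidableRel G.Adj]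
    (u v a b : V) : ℕ :=
  (({a, b} : Finset V).filter (fun x => G.Adj x u ∨ G.Adj x v)).card

/-- `M(P, Q)`: the number of edges of `Q` admitting an elementary merge of `P` into `Q`,
plus `d(P, Q)`. -/
def MPQ {V : Type*} [DecidableEq V] (G : SimpleGraph V) [DecidableRel G.Adj] (u v : V)
    {a b : V} (Q : G.Walk a b) : ℕ :=
  mergeCount G u v Q + dEnds G u v a b

/-!
Write `P = (u, …, v)`. Since the paths of `𝒫` partition `V`, the Dirac condition gives
`∑_Q (d_Q(u) + d_Q(v)) = deg u + deg v ≥ n = ∑_Q |Q|`. For every other path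
`Q = (q₀, …, q_L)`, at least `d_Q(u) + d_Q(v) - L - d(P, Q)` indices `i < L` have both
`u ~ q_{i+1}` and `v ~ q_i`, and each such edge admits an elementary merge, so
`d_Q(u) + d_Q(v) + 1 ≤ M(P, Q) + |Q|`. Summing over `Q ≠ P` leaves `M(P) ≥ |𝒫| - 1` plus the
deficit `|P| - d_P(u) - d_P(v)`, which is positive when `P` is sociable. When `P ∈ A(𝒫)` with
witness `P'`, one uses the trivial bound `M(P, P') ≥ 0` instead, gaining `|P'| - 1 ≥ |P| - 1`,
which makes up for `d_P(u) + d_P(v) ≤ 2 (|P| - 1)`.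
-/

open Finset

namespace SimpleGraph.Walk

variable {V : Type*} {G : SimpleGraph V} [DecidableEq V] {a b : V}

theorem support_toFinset_eq_insert_image_getVert (Q : G.Walk a b) :
    Q.support.toFinset = insert b ((range Q.length).image Q.getVert) := by
  ext y
  simp only [List.mem_toFinset, mem_support_iff_exists_getVert, mem_insert, mem_image, mem_range]
  constructor
  · rintro ⟨n, rfl, hn⟩
    rcases hn.lt_or_eq with hn | rfl
    · exact Or.inr ⟨n, hn, rfl⟩
    · exact Or.inl Q.getVert_length
  · rintro (rfl | ⟨n, hn, rfl⟩)
    · exact ⟨Q.length, Q.getVert_length, le_rfl⟩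
    · exact ⟨n, rfl, hn.le⟩

theorem support_toFinset_eq_insert_image_getVert_succ (Q : G.Walk a b) :
    Q.support.toFinset = insert a ((range Q.length).image fun i => Q.getVert (i + 1)) := by
  ext y
  simp only [List.mem_toFinset, mem_support_iff_exists_getVert, mem_insert, mem_image, mem_range]
  constructor
  · rintro ⟨_ | n, rfl, hn⟩
    · exact Or.inl Q.getVert_zero
    · exact Or.inr ⟨n, hn, rfl⟩
  · rintro (rfl | ⟨n, hn, rfl⟩)
    · exact ⟨0, Q.getVert_zero, Nat.zero_le _⟩
    · exact ⟨n + 1, rfl, hn⟩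

theorem IsPath.card_support_toFinset {Q : G.Walk a b} (hQ : Q.IsPath) :
    Q.support.toFinset.card = Q.length + 1 := by
  rw [List.toFinset_card_of_nodup hQ.support_nodup, length_support]

theorem IsPath.ne_of_two_le_card_support {Q : G.Walk a b} (hQ : Q.IsPath)
    (h : 2 ≤ Q.support.toFinset.card) : a ≠ b := by
  rintro rfl
  rw [(isPath_iff_nil.mp hQ).eq_nil] at h
  simp at h

end SimpleGraph.Walk

theorem Finset.card_filter_insert_image_le {α β : Type*} [DecidableEq β] (q : β → Prop)
    [DecidablePred q] (c : β) (s : Finset α) (f : α → β) :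
    ((insert c (s.image f)).filter q).card ≤
      (s.filter fun i => q (f i)).card + if q c then 1 else 0 := by
  rw [filter_insert, filter_image]
  split_ifs
  · exact (card_insert_le _ _).trans (Nat.add_le_add_right card_image_le 1)
  · exact card_image_le

section Counting

variable {V : Type*} (G : SimpleGraph V) [DecidableRel G.Adj] {a b : V}

theorem card_filter_add_card_filter_le_mergeCount_add_length (u v : V) (Q : G.Walk a b) :
    ((range Q.length).filter fun i => G.Adj u (Q.getVert (i + 1))).card +
      ((range Q.length).filter fun i => G.Adj v (Q.getVert i)).card ≤
      mergeCount G u v Q + Q.length := by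
  set S := (range Q.length).filter fun i => G.Adj u (Q.getVert (i + 1))
  set T := (range Q.length).filter fun i => G.Adj v (Q.getVert i)
  have hinter : (S ∩ T).card ≤ mergeCount G u v Q := by
    refine card_le_card fun i hi => ?_
    simp only [S, T, mem_inter, mem_filter] at hi
    exact mem_filter.mpr ⟨hi.1.1, Or.inr ⟨hi.1.2, hi.2.2⟩⟩
  have hunion : (S ∪ T).card ≤ Q.length :=
    (card_le_card (union_subset (filter_subset _ _) (filter_subset _ _))).trans_eq
      (card_range _)
  have := card_union_add_card_inter S T
  omega

variable [DecidableEq V]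

theorem dOn_le_card_filter_getVert_add (Q : G.Walk a b) (x : V) :
    dOn G Q x ≤ ((range Q.length).filter fun i => G.Adj x (Q.getVert i)).card +
      if G.Adj x b then 1 else 0 := by
  rw [dOn, Q.support_toFinset_eq_insert_image_getVert]
  exact card_filter_insert_image_le _ _ _ _

theorem dOn_le_card_filter_getVert_succ_add (Q : G.Walk a b) (x : V) :
    dOn G Q x ≤ ((range Q.length).filter fun i => G.Adj x (Q.getVert (i + 1))).card +
      if G.Adj x a then 1 else 0 := by
  rw [dOn, Q.support_toFinset_eq_insert_image_getVert_succ]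
  exact card_filter_insert_image_le _ _ _ _

theorem ite_add_ite_le_dEnds (u v : V) (hab : a ≠ b) :
    (if G.Adj u a then 1 else 0) + (if G.Adj v b then 1 else 0) ≤ dEnds G u v a b := by
  rw [dEnds, filter_insert, filter_singleton]
  split_ifs <;> simp_all [G.adj_comm]

theorem dOn_add_dOn_add_one_le_MPQ_add_card {Q : G.Walk a b} (hQ : Q.IsPath) (hab : a ≠ b)
    (u v : V) : dOn G Q u + dOn G Q v + 1 ≤ MPQ G u v Q + Q.support.toFinset.card := by
  have hu := dOn_le_card_filter_getVert_succ_add G Q u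
  have hv := dOn_le_card_filter_getVert_add G Q v
  have hmerge := card_filter_add_card_filter_le_mergeCount_add_length G u v Q
  have hends := ite_add_ite_le_dEnds G u v hab
  rw [MPQ, hQ.card_support_toFinset]
  omega

theorem dOn_add_one_le_card {Q : G.Walk a b} {x : V} (hx : x ∈ Q.support) :
    dOn G Q x + 1 ≤ Q.support.toFinset.card := by
  have hsub : Q.support.toFinset.filter (fun y => G.Adj x y) ⊆ Q.support.toFinset.erase x :=
    fun y hy => (mem_filter.mp hy).elim fun hy hxy => mem_erase.mpr ⟨hxy.ne.symm, hy⟩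
  have := card_le_card hsub
  rw [card_erase_of_mem (List.mem_toFinset.mpr hx)] at this
  have : 0 < Q.support.toFinset.card := card_pos.mpr ⟨x, List.mem_toFinset.mpr hx⟩
  unfold dOn
  omega

theorem sum_dOn_add_card_le_sum_MPQ_add_card {ι : Type*} {s t : ι → V}
    {p : ∀ i, G.Walk (s i) (t i)} (hpath : ∀ i, (p i).IsPath) (hne : ∀ i, s i ≠ t i) (u v : V)
    (S : Finset ι) :
    ∑ j ∈ S, (dOn G (p j) u + dOn G (p j) v) + S.card ≤
      ∑ j ∈ S, MPQ G u v (p j) + ∑ j ∈ S, (p j).support.toFinset.card := by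
  rw [card_eq_sum_ones, ← sum_add_distrib, ← sum_add_distrib]
  exact sum_le_sum fun j _ => dOn_add_dOn_add_one_le_MPQ_add_card G (hpath j) (hne j) u v

end Counting

section PathCover

variable {V ι : Type*} [Fintype V] [DecidableEq V] [Fintype ι] {G : SimpleGraph V}
  {s t : ι → V} (p : ∀ i, G.Walk (s i) (t i))
  (hdisj : ∀ i j, i ≠ j → ∀ x ∈ (p i).support, x ∉ (p j).support)
  (hcover : ∀ x : V, ∃ i, x ∈ (p i).support)

include hdisj hcover in
theorem sum_card_filter_support_eq (q : V → Prop) [DecidablePred q] :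
    ∑ i, ((p i).support.toFinset.filter q).card = (univ.filter q).card := by
  rw [← card_biUnion]
  · congr 1
    ext x
    simpa using fun _ => hcover x
  · intro i _ j _ hij
    exact disjoint_left.mpr fun x hi hj =>
      hdisj i j hij x (List.mem_toFinset.mp (mem_filter.mp hi).1)
        (List.mem_toFinset.mp (mem_filter.mp hj).1)

include hdisj hcover in
theorem sum_card_support_eq_card :
    ∑ i, (p i).support.toFinset.card = Fintype.card V := by
  simpa using sum_card_filter_support_eq p hdisj hcover fun _ => True

include hdisj hcover in
theorem sum_dOn_eq_degree [DecidableRel G.Adj] (x : V) :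
    ∑ i, dOn G (p i) x = G.degree x := by
  rw [← G.card_neighborFinset_eq_degree, G.neighborFinset_eq_filter]
  exact sum_card_filter_support_eq p hdisj hcover _

end PathCover

/-- Let `G` be a Dirac graph (every degree is at least `n / 2`), and let `𝒫` be a path cover
of `G` (given by paths `p i`, `i : Fin k`, with endpoints `s i` and `t i`) in which every
path has at least `2` vertices.  If the path `p i₀` is good with respect to `𝒫`
(i.e. it is sociable, or there is another path `p j` at least as long whose vertices are
not adjacent to either endpoint of `p i₀`), then `M(p i₀) = ∑_{j ≠ i₀} M(p i₀, p j) ≥ k`. -/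
theorem stmt4 {V : Type*} [Fintype V] [DecidableEq V]
    (G : SimpleGraph V) [DecidableRel G.Adj]
    (hDirac : ∀ x : V, Fintype.card V ≤ 2 * G.degree x)
    (k : ℕ) (s t : Fin k → V) (p : ∀ i, G.Walk (s i) (t i))
    (hpath : ∀ i, (p i).IsPath)
    (hlen : ∀ i, 2 ≤ (p i).support.toFinset.card)
    (hdisj : ∀ i j, i ≠ j → ∀ x ∈ (p i).support, x ∉ (p j).support)
    (hcover : ∀ x : V, ∃ i, x ∈ (p i).support)
    (i₀ : Fin k)
    (hgood :
      (dOn G (p i₀) (s i₀) + dOn G (p i₀) (t i₀) + 1 ≤ (p i₀).support.toFinset.card) ∨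
      (∃ j, j ≠ i₀ ∧ (p i₀).support.toFinset.card ≤ (p j).support.toFinset.card ∧
        dOn G (p j) (s i₀) + dOn G (p j) (t i₀) = 0)) :
    k ≤ ∑ j ∈ Finset.univ.filter (fun j => j ≠ i₀), MPQ G (s i₀) (t i₀) (p j) := by
  have hne i := (hpath i).ne_of_two_le_card_support (hlen i)
  have hdeg : ∑ i, (p i).support.toFinset.card ≤
      ∑ i, (dOn G (p i) (s i₀) + dOn G (p i) (t i₀)) := by
    rw [sum_card_support_eq_card p hdisj hcover, sum_add_distrib,
      sum_dOn_eq_degree p hdisj hcover, sum_dOn_eq_degree p hdisj hcover]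
    linarith [hDirac (s i₀), hDirac (t i₀)]
  have hk : (univ.erase i₀).card = k - 1 := by simp
  rw [filter_ne']
  simp only [← add_sum_erase _ _ (mem_univ i₀)] at hdeg
  rcases hgood with hsociable | ⟨j₀, hj₀, hcard, hfar⟩
  · have hmerge := sum_dOn_add_card_le_sum_MPQ_add_card G hpath hne (s i₀) (t i₀)
      (univ.erase i₀)
    omega
  · have hj₀ : j₀ ∈ univ.erase i₀ := mem_erase.mpr ⟨hj₀, mem_univ j₀⟩
    have hmerge' := sum_dOn_add_card_le_sum_MPQ_add_card G hpath hne (s i₀) (t i₀)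
      ((univ.erase i₀).erase j₀)
    rw [card_erase_of_mem hj₀] at hmerge'
    simp only [← add_sum_erase _ _ hj₀] at hdeg ⊢
    have hs := dOn_add_one_le_card G (p i₀).start_mem_support
    have ht := dOn_add_one_le_card G (p i₀).end_mem_support
    omega
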